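/- Let A be a finite alphabet, let F ⊆ A* be a recurrent set, and let X be an F-thin and F-maximal bifix code. Then X is left F-complete, i.e., every element of F is a suffix of some element of X*. -/

import Mathlib

/-! Common definitions: words over a finite alphabet `A` are terms of `List A`,
concatenation being the monoid operation of the free monoid `A*`. -/

namespace PaperDefs

variable {A : Type*}

/-- `w` belongs to the Kleene star `X*` of `X`: it is a (possibly empty)
concatenation of elements of `X`. -/
def InStar (X : Set (List A)) (w : List A) : Prop :=
  ∃ l : List (List A), (∀ u ∈ l, u ∈ X) ∧ l.flatten = w

/-- The language `X*`. -/
def star (X : Set (List A)) : Set (List A) := {w | InStar X w}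

/-- A prefix code: a nonempty set of nonempty words, none of which is a proper
prefix of another. -/
def IsPrefixCode (X : Set (List A)) : Prop :=
  X.Nonempty ∧ (∀ w ∈ X, w ≠ []) ∧ ∀ u ∈ X, ∀ v ∈ X, u <+: v → u = v

/-- A suffix code. -/
def IsSuffixCode (X : Set (List A)) : Prop :=
  X.Nonempty ∧ (∀ w ∈ X, w ≠ []) ∧ ∀ u ∈ X, ∀ v ∈ X, u <:+ v → u = v

/-- A bifix code. -/
def IsBifixCode (X : Set (List A)) : Prop := IsPrefixCode X ∧ IsSuffixCode X

/-- A factorial set contains all factors of its elements. -/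
def Factorial (F : Set (List A)) : Prop := ∀ w ∈ F, ∀ u, u <:+: w → u ∈ F

/-- A recurrent set. -/
def Recurrent (F : Set (List A)) : Prop :=
  Factorial F ∧ F.Nonempty ∧ F ≠ {[]} ∧ ∀ u ∈ F, ∀ v ∈ F, ∃ w, u ++ w ++ v ∈ F

/-- A uniformly recurrent set. -/
def UniformlyRecurrent (F : Set (List A)) : Prop :=
  Recurrent F ∧ ∀ u ∈ F, ∃ n : ℕ, ∀ w ∈ F, n ≤ w.length → u <:+: w

/-- A parse of `w` with respect to `X` : a triple `(v, x, u)` with `w = v x u`,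
`v` has no suffix in `X`, `x ∈ X*`, and `u` has no prefix in `X`. -/
def IsParse (X : Set (List A)) (w : List A) (p : List A × List A × List A) : Prop :=
  p.1 ++ p.2.1 ++ p.2.2 = w ∧ (¬ ∃ s ∈ X, s <:+ p.1) ∧ InStar X p.2.1 ∧
    ¬ ∃ s ∈ X, s <+: p.2.2

/-- `δ_X(w)`, the number of parses of `w` with respect to `X`. -/
noncomputable def delta (X : Set (List A)) (w : List A) : ℕ :=
  {p | IsParse X w p}.ncard

/-- The `F`-degree `d_F(X)` of `X`, as an extended natural number. -/
noncomputable def Fdeg (X F : Set (List A)) : ℕ∞ :=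
  ⨆ w ∈ F, (delta X w : ℕ∞)

/-- The degree `d(X)` of `X`. -/
noncomputable def deg (X : Set (List A)) : ℕ∞ := Fdeg X Set.univ

/-- An `F`-maximal bifix code. -/
def IsFMaximalBifixCode (F X : Set (List A)) : Prop :=
  IsBifixCode X ∧ X ⊆ F ∧ ∀ Y : Set (List A), IsBifixCode Y → Y ⊆ F → X ⊆ Y → Y = X

/-- An `F`-maximal prefix code. -/
def IsFMaximalPrefixCode (F X : Set (List A)) : Prop :=
  IsPrefixCode X ∧ X ⊆ F ∧ ∀ Y : Set (List A), IsPrefixCode Y → Y ⊆ F → X ⊆ Y → Y = X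

/-- `X` is `F`-thin: some word of `F` is not a factor of any element of `X`. -/
def FThin (F X : Set (List A)) : Prop := ∃ w ∈ F, ∀ x ∈ X, ¬ w <:+: x

/-- A rational (regular) language. -/
def IsRational (L : Set (List A)) : Prop :=
  ∃ (σ : Type) (_ : Fintype σ) (M : DFA A σ), ∀ w : List A, w ∈ M.accepts ↔ w ∈ L

/-- The syntactic congruence of the language `L`. -/
def SynEquiv (L : Set (List A)) (u v : List A) : Prop :=
  ∀ x y : List A, x ++ u ++ y ∈ L ↔ x ++ v ++ y ∈ L

/-- `η : A* → M` is (a realization of) the syntactic homomorphism onto the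
syntactic monoid of `L`. -/
structure IsSyntacticHom (L : Set (List A)) {M : Type*} [Monoid M] (η : List A → M) : Prop where
  map_nil : η [] = 1
  map_append : ∀ u v : List A, η (u ++ v) = η u * η v
  surj : Function.Surjective η
  syn : ∀ u v : List A, η u = η v ↔ SynEquiv L u v

section Green

variable {M : Type*} [Monoid M]

/-- The `J`-order: `MuM ⊆ MvM`. -/
def JLe (u v : M) : Prop := ∃ x y, u = x * v * y

/-- Green's relation `J`. -/
def JEquiv (u v : M) : Prop := JLe u v ∧ JLe v u

/-- Green's relation `R`. -/
def REquiv (u v : M) : Prop := (∃ x, v = u * x) ∧ (∃ x, u = v * x)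

/-- Green's relation `L`. -/
def LEquiv (u v : M) : Prop := (∃ x, v = x * u) ∧ (∃ x, u = x * v)

/-- Green's relation `H`. -/
def HEquiv (u v : M) : Prop := REquiv u v ∧ LEquiv u v

/-- Green's relation `D`. -/
def DEquiv (u v : M) : Prop := ∃ s, REquiv u s ∧ LEquiv s v

/-- The `H`-class of an element. -/
def HClass (e : M) : Set M := {m | HEquiv m e}

/-- Membership in the minimum ideal (minimum `J`-class) of `M`. -/
def InMinIdeal (m : M) : Prop := ∀ n : M, JLe m n

/-- `S` is a subgroup of the monoid `M`: a subsemigroup which is a group. -/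
def IsSubgroupIn (S : Set M) : Prop :=
  S.Nonempty ∧ (∀ x ∈ S, ∀ y ∈ S, x * y ∈ S) ∧
    ∃ e ∈ S, (∀ x ∈ S, e * x = x ∧ x * e = x) ∧ ∀ x ∈ S, ∃ y ∈ S, x * y = e ∧ y * x = e

/-- The subsets `S ⊆ M` and `T ⊆ N` (each closed under multiplication, e.g.
maximal subgroups) are isomorphic as groups: there is a multiplicative
bijection from `S` onto `T`. -/
def GroupIsoOn {N : Type*} [Monoid N] (S : Set M) (T : Set N) : Prop :=
  ∃ φ : M → N, Set.BijOn φ S T ∧ ∀ x ∈ S, ∀ y ∈ S, φ (x * y) = φ x * φ y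

end Green

/-- `m` belongs to `J_F(X)`, the minimum `J`-class of the syntactic monoid of
`X*` meeting the image of `F` under the syntactic homomorphism `η`. -/
def InFMinJ {M : Type*} [Monoid M] (η : List A → M) (F : Set (List A)) (m : M) : Prop :=
  (∃ w ∈ F, JEquiv m (η w)) ∧ ∀ w ∈ F, JLe m (η w)

/-- A group code: a prefix code `Z` defined by a transitive permutation
representation of `A*` on a finite set, `Z*` being the stabilizer of a point. -/
def IsGroupCode (Z : Set (List A)) : Prop :=
  IsPrefixCode Z ∧
  ∃ (Q : Type) (_ : Fintype Q) (q₀ : Q) (α : List A → Equiv.Perm Q),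
    α [] = 1 ∧ (∀ u v : List A, α (u ++ v) = α u * α v) ∧
    (∀ q q' : Q, ∃ w : List A, α w q = q') ∧
    (∀ w : List A, InStar Z w ↔ α w q₀ = q₀) ∧
    Z = {w : List A | α w q₀ = q₀ ∧ w ≠ [] ∧
          ¬ ∃ u v : List A, u ≠ [] ∧ v ≠ [] ∧ α u q₀ = q₀ ∧ α v q₀ = q₀ ∧ w = u ++ v}

/-- Vertices of the extension graph of `w` in `F`: the disjoint union of
`L(w)` and `R(w)`. -/
def ExtVertex (F : Set (List A)) (w : List A) : Sum A A → Prop :=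
  fun x => Sum.elim (fun a => a :: w ∈ F) (fun b => w ++ [b] ∈ F) x

/-- The edge relation of the extension graph of `w` in `F`. -/
def ExtRel (F : Set (List A)) (w : List A) : Sum A A → Sum A A → Prop :=
  fun x y =>
    match x, y with
    | Sum.inl a, Sum.inr b => a :: (w ++ [b]) ∈ F
    | _, _ => False

/-- The extension graph `G(w)` of `w` in `F`. -/
def extGraph (F : Set (List A)) (w : List A) :
    SimpleGraph {x : Sum A A // ExtVertex F w x} :=
  SimpleGraph.fromRel fun x y => ExtRel F w x.1 y.1

/-- `F` is connected: every extension graph of a word of `F` is connected. -/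
def ConnectedSet (F : Set (List A)) : Prop :=
  ∀ w ∈ F, (extGraph F w).Connected

/-- `F` is a tree set: every extension graph of a word of `F` is a tree. -/
def TreeSet (F : Set (List A)) : Prop :=
  ∀ w ∈ F, (extGraph F w).IsTree

/-- The alphabet of `F` is the whole of `A`. -/
def AlphabetIs (F : Set (List A)) : Prop := ∀ a : A, [a] ∈ F

/-- The left quotient `u⁻¹L`, i.e. the state reached from the initial state of
the minimal automaton of `L` by reading `u`. -/
def leftQuot (L : Set (List A)) (u : List A) : Set (List A) := {w | u ++ w ∈ L}

/-- The set of states of the minimal automaton of `L`: the nonempty left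
quotients of `L`. -/
def MinStates (L : Set (List A)) : Set (Set (List A)) :=
  {q | q.Nonempty ∧ ∃ u : List A, q = leftQuot L u}

/-- The (partial) transition of the minimal automaton: `q · v`; it is defined
when the resulting set is nonempty. -/
def stepW (q : Set (List A)) (v : List A) : Set (List A) := {w | v ++ w ∈ q}

/-- The rank of the word `v` in the minimal automaton of `L`: the number of
distinct states `q · v` with `q` a state such that `q · v` is defined. -/
noncomputable def wordRank (L : Set (List A)) (v : List A) : ℕ :=
  ((fun q => stepW q v) '' {q ∈ MinStates L | (stepW q v).Nonempty}).ncard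

/-- The set of first return words of `F` to `u`. -/
def ReturnWords (F : Set (List A)) (u : List A) : Set (List A) :=
  {v | v ≠ [] ∧ u ++ v ∈ F ∧ u <:+ u ++ v ∧
    ¬ ∃ x y : List A, x ≠ [] ∧ y ≠ [] ∧ u ++ v = x ++ u ++ y}

/-- A code: every word has at most one factorization into elements of `X`. -/
def IsCode (X : Set (List A)) : Prop :=
  ∀ l m : List (List A), (∀ u ∈ l, u ∈ X) → (∀ u ∈ m, u ∈ X) →
    l.flatten = m.flatten → l = m

/-- The set `I = Q_X · K` of images of states of the minimal automaton of `L`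
under (partial) transitions by words whose syntactic image lies in `K`. -/
def ImageSet (L : Set (List A)) {M : Type*} [Monoid M] (η : List A → M) (K : Set M) :
    Set (Set (List A)) :=
  {p | ∃ q ∈ MinStates L, ∃ v : List A, η v ∈ K ∧ (stepW q v).Nonempty ∧ p = stepW q v}

/-- A witness for "a finite monoid `M` together with a monoid homomorphism
`A* → M`". -/
structure FiniteMonoidHomWitness (A : Type*) where
  M : Type
  [fin : Fintype M]
  [mon : Monoid M]
  φ : List A → M
  map_nil : φ [] = 1
  map_append : ∀ u v : List A, φ (u ++ v) = φ u * φ v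

end PaperDefs

/-! Call `w ∈ F` suffix-comparable with `X` if some `x ∈ X` is a suffix of `w` or has `w` as a
suffix; if every word of `F` is, peeling off final factors in `X` shows that `X` is left
`F`-complete. Suppose `w ∈ F` is not. Then no prefix of a word ending with `w` has a suffix in
`X`. Take `v ∈ F` that is not a factor of any word of `X`, `g = v c w ∈ F`, and, by recurrence,
`y ∈ F` ending with `g` and having `|g| + 2` prefixes ending with `w`. Since `X` is a suffix
code, sending a prefix `q` of `y` with no suffix in `X` to the remainder of a greedy
`X`-factorization of the rest of `y` is injective. By `F`-maximality every word of `F` is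
prefix- or suffix-comparable with `X`, and this forces every such remainder to have length at
most `|g|`: there are only `|g| + 1` of them. -/

namespace PaperDefs

variable {A : Type*} {F X : Set (List A)}

theorem InStar.of_mem {x : List A} (hx : x ∈ X) : InStar X x :=
  ⟨[x], by simpa using hx, by simp⟩

theorem InStar.append_mem {z x : List A} (hz : InStar X z) (hx : x ∈ X) : InStar X (z ++ x) := by
  obtain ⟨l, hl, rfl⟩ := hz
  exact ⟨l ++ [x], by simpa [or_imp, forall_and] using ⟨hl, hx⟩, by simp⟩

theorem forall_mem_insert_eq_of_rel {R : List A → List A → Prop} {y : List A}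
    (hX : ∀ u ∈ X, ∀ v ∈ X, R u v → u = v) (hy : ∀ x ∈ X, ¬ R x y ∧ ¬ R y x) :
    ∀ u ∈ insert y X, ∀ v ∈ insert y X, R u v → u = v := by
  rintro u (rfl | hu) v (rfl | hv) huv
  · rfl
  · exact absurd huv (hy v hv).2
  · exact absurd huv (hy u hu).1
  · exact hX u hu v hv huv

theorem IsFMaximalBifixCode.exists_comparable (hX : IsFMaximalBifixCode F X) {y : List A}
    (hy : y ∈ F) : ∃ x ∈ X, x <:+ y ∨ y <:+ x ∨ x <+: y ∨ y <+: x := by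
  obtain ⟨⟨hpre, hsuf⟩, hXF, hmax⟩ := hX
  by_contra! hinc
  have hy_ne : y ≠ [] := by
    rintro rfl
    obtain ⟨x, hx⟩ := hpre.1
    exact (hinc x hx).2.1 x.nil_suffix
  have hne : ∀ u ∈ insert y X, u ≠ [] := Set.forall_mem_insert.2 ⟨hy_ne, hpre.2.1⟩
  have hbifix : IsBifixCode (insert y X) :=
    ⟨⟨Set.insert_nonempty y X, hne,
        forall_mem_insert_eq_of_rel hpre.2.2 fun x hx => ⟨(hinc x hx).2.2.1, (hinc x hx).2.2.2⟩⟩,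
      ⟨Set.insert_nonempty y X, hne,
        forall_mem_insert_eq_of_rel hsuf.2.2 fun x hx => ⟨(hinc x hx).1, (hinc x hx).2.1⟩⟩⟩
  have hyX : y ∈ X :=
    hmax _ hbifix (Set.insert_subset hy hXF) (Set.subset_insert y X) ▸ Set.mem_insert y X
  exact (hinc y hyX).1 (List.suffix_refl y)

theorem exists_flatten_append_not_prefix (hX : ∀ x ∈ X, x ≠ []) (r : List A) :
    ∃ l : List (List A), (∀ x ∈ l, x ∈ X) ∧
      ∃ u, l.flatten ++ u = r ∧ ¬ ∃ x ∈ X, x <+: u := by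
  by_cases h : ∃ x ∈ X, x <+: r
  · obtain ⟨x, hx, t, rfl⟩ := h
    have : t.length < (x ++ t).length := by simp [List.length_pos_iff.2 (hX x hx)]
    obtain ⟨l, hl, u, rfl, hu⟩ := exists_flatten_append_not_prefix hX t
    exact ⟨x :: l, by simpa [hx] using hl, u, by simp, hu⟩
  · exact ⟨[], by simp, r, by simp, h⟩
termination_by r.length

theorem eq_of_append_flatten_eq (hX : ∀ u ∈ X, ∀ v ∈ X, u <:+ v → u = v)
    {l₁ l₂ : List (List A)} (hl₁ : ∀ x ∈ l₁, x ∈ X) (hl₂ : ∀ x ∈ l₂, x ∈ X) {v₁ v₂ : List A}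
    (hv₁ : ¬ ∃ x ∈ X, x <:+ v₁) (hv₂ : ¬ ∃ x ∈ X, x <:+ v₂)
    (h : v₁ ++ l₁.flatten = v₂ ++ l₂.flatten) : v₁ = v₂ := by
  induction l₁ using List.reverseRecOn generalizing l₂ with
  | nil =>
    rcases l₂.eq_nil_or_concat' with rfl | ⟨l₂, b, rfl⟩
    · simpa using h
    · exact absurd ⟨b, hl₂ b (by simp), v₂ ++ l₂.flatten, by simpa using h.symm⟩ hv₁
  | append_singleton l₁ b₁ ih =>
    rcases l₂.eq_nil_or_concat' with rfl | ⟨l₂, b₂, rfl⟩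
    · exact absurd ⟨b₁, hl₁ b₁ (by simp), v₁ ++ l₁.flatten, by simpa using h⟩ hv₂
    · have hb₁ : b₁ ∈ X := hl₁ b₁ (by simp)
      have hb₂ : b₂ ∈ X := hl₂ b₂ (by simp)
      have e : (v₁ ++ l₁.flatten) ++ b₁ = (v₂ ++ l₂.flatten) ++ b₂ := by simpa using h
      have hb : b₁ = b₂ := by
        rcases List.suffix_or_suffix_of_suffix (e ▸ List.suffix_append _ _)
            (List.suffix_append _ b₂) with h | h
        · exact hX _ hb₁ _ hb₂ h
        · exact (hX _ hb₂ _ hb₁ h).symm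
      subst hb
      exact ih (fun x hx => hl₁ x (by simp [hx])) (fun x hx => hl₂ x (by simp [hx]))
        (List.append_cancel_right e)

theorem card_le_of_forall_not_prefix_length_le (hX : ∀ x ∈ X, x ≠ [])
    (hsuf : ∀ u ∈ X, ∀ v ∈ X, u <:+ v → u = v) {y : List A} {N : ℕ}
    (hN : ∀ u, u <:+ y → (¬ ∃ x ∈ X, x <+: u) → u.length ≤ N)
    (S : Finset (List A)) (hS : ∀ q ∈ S, q <+: y ∧ ¬ ∃ x ∈ X, x <:+ q) : S.card ≤ N + 1 := by
  choose L hL U hLU hU_not_prefix using exists_flatten_append_not_prefix hX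
  have hparse : ∀ q ∈ S, q ++ (L (y.drop q.length)).flatten ++ U (y.drop q.length) = y := by
    intro q hq
    rw [List.append_assoc, hLU, List.prefix_iff_eq_append.1 (hS q hq).1]
  have hUy : ∀ q ∈ S, U (y.drop q.length) <:+ y := fun q hq => ⟨_, hparse q hq⟩
  calc S.card ≤ (Finset.range (N + 1)).card := by
        refine Finset.card_le_card_of_injOn (fun q => (U (y.drop q.length)).length) ?_ ?_
        · intro q hq
          simpa [Nat.lt_succ_iff] using hN _ (hUy q hq) (hU_not_prefix _)
        · intro q₁ hq₁ q₂ hq₂ hlen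
          have hU : U (y.drop q₁.length) = U (y.drop q₂.length) := by
            rw [List.suffix_iff_eq_drop.1 (hUy q₁ hq₁), List.suffix_iff_eq_drop.1 (hUy q₂ hq₂)]
            simp only at hlen
            rw [hlen]
          have e : q₁ ++ (L (y.drop q₁.length)).flatten ++ U (y.drop q₁.length) =
              q₂ ++ (L (y.drop q₂.length)).flatten ++ U (y.drop q₁.length) := by
            rw [hparse q₁ hq₁, hU, hparse q₂ hq₂]
          exact eq_of_append_flatten_eq hsuf (hL _) (hL _) (hS q₁ hq₁).2 (hS q₂ hq₂).2
            (List.append_cancel_right e)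
    _ = N + 1 := Finset.card_range _

theorem Recurrent.exists_suffix_many_prefixes (hF : Recurrent F) {w g : List A} (hw : w ∈ F)
    (hw_ne : w ≠ []) (hg : g ∈ F) (n : ℕ) :
    ∃ y ∈ F, g <:+ y ∧ ∃ S : Finset (List A), S.card = n ∧ ∀ q ∈ S, q <+: y ∧ w <:+ q := by
  classical
  induction n with
  | zero => exact ⟨g, hg, List.suffix_refl g, ∅, rfl, by simp⟩
  | succ n ih =>
    obtain ⟨y, hy, -, S, hS, hSy⟩ := ih
    obtain ⟨c, hc⟩ := hF.2.2.2 y hy w hw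
    obtain ⟨d, hd⟩ := hF.2.2.2 _ hc g hg
    refine ⟨_, hd, List.suffix_append _ _, insert (y ++ c ++ w) S, ?_, ?_⟩
    · rw [Finset.card_insert_of_notMem, hS]
      intro hmem
      have := (hSy _ hmem).1.length_le
      have := List.length_pos_iff.2 hw_ne
      simp only [List.length_append] at *
      omega
    · intro q hq
      rcases Finset.mem_insert.1 hq with rfl | hq
      · exact ⟨⟨d ++ g, by simp⟩, List.suffix_append _ _⟩
      · exact ⟨(hSy q hq).1.trans ⟨c ++ w ++ d ++ g, by simp⟩, (hSy q hq).2⟩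

theorem IsFMaximalBifixCode.exists_suffix_comparable (hX : IsFMaximalBifixCode F X)
    (hF : Recurrent F) (hThin : FThin F X) {w : List A} (hw : w ∈ F) :
    ∃ x ∈ X, x <:+ w ∨ w <:+ x := by
  by_contra! hinc
  obtain ⟨v, hv, hv_not⟩ := hThin
  have hw_ne : w ≠ [] := by
    rintro rfl
    obtain ⟨x, hx⟩ := hX.1.1.1
    exact (hinc x hx).2 x.nil_suffix
  have hno_suffix : ∀ q, w <:+ q → ¬ ∃ x ∈ X, x <:+ q := by
    rintro q hwq ⟨x, hx, hxq⟩
    rcases List.suffix_or_suffix_of_suffix hxq hwq with h | h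
    exacts [(hinc x hx).1 h, (hinc x hx).2 h]
  obtain ⟨c, hg⟩ := hF.2.2.2 v hv w hw
  obtain ⟨y, hy, hgy, S, hS, hSy⟩ :=
    hF.exists_suffix_many_prefixes hw hw_ne hg ((v ++ c ++ w).length + 2)
  have hshort : ∀ u, u <:+ y → (¬ ∃ x ∈ X, x <+: u) → u.length ≤ (v ++ c ++ w).length := by
    intro u huy hu
    by_contra! hlong
    have hgu : v ++ c ++ w <:+ u := (List.suffix_or_suffix_of_suffix hgy huy).resolve_right
      fun h => absurd h.length_le (by omega)
    have hwu : w <:+ u := (List.suffix_append _ _).trans hgu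
    have hvu : v <:+: u := List.IsInfix.trans ⟨[], c ++ w, by simp⟩ hgu.isInfix
    obtain ⟨x, hx, h | h | h | h⟩ := hX.exists_comparable (hF.1 y hy u huy.isInfix)
    · exact hno_suffix u hwu ⟨x, hx, h⟩
    · exact (hinc x hx).2 (hwu.trans h)
    · exact hu ⟨x, hx, h⟩
    · exact hv_not x hx (hvu.trans h.isInfix)
  have := card_le_of_forall_not_prefix_length_le hX.1.1.2.1 hX.1.2.2.2 hshort S
    fun q hq => ⟨(hSy q hq).1, hno_suffix q (hSy q hq).2⟩
  omega

theorem exists_inStar_suffix_of_forall_suffix_comparable (hF : Factorial F)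
    (hX : ∀ x ∈ X, x ≠ []) (hcomp : ∀ w ∈ F, ∃ x ∈ X, x <:+ w ∨ w <:+ x) {w : List A}
    (hw : w ∈ F) : ∃ z, InStar X z ∧ w <:+ z := by
  obtain ⟨x, hx, ⟨w', rfl⟩ | hwx⟩ := hcomp w hw
  · have : w'.length < (w' ++ x).length := by simp [List.length_pos_iff.2 (hX x hx)]
    obtain ⟨z, hz, hw'z⟩ := exists_inStar_suffix_of_forall_suffix_comparable hF hX hcomp
      (hF _ hw w' (List.prefix_append w' x).isInfix)
    exact ⟨z ++ x, hz.append_mem hx, List.suffix_append_self_iff.2 hw'z⟩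
  · exact ⟨x, .of_mem hx, hwx⟩
termination_by w.length

end PaperDefs

open PaperDefs in
theorem stmt_18_general {A : Type}
    (F X : Set (List A)) (hF : Recurrent F)
    (hThin : FThin F X) (hMax : IsFMaximalBifixCode F X) :
    ∀ w ∈ F, ∃ z, InStar X z ∧ w <:+ z := fun _ hw =>
  exists_inStar_suffix_of_forall_suffix_comparable hF.1 hMax.1.1.2.1
    (fun _ hv => hMax.exists_suffix_comparable hF hThin hv) hw

open PaperDefs in
theorem stmt_18 {A : Type} [Fintype A]
    (F X : Set (List A)) (hF : Recurrent F)
    (hThin : FThin F X) (hMax : IsFMaximalBifixCode F X) :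
    ∀ w ∈ F, ∃ z, InStar X z ∧ w <:+ z :=
  stmt_18_general F X hF hThin hMax
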